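/- Fix α ∈ (0,1), let a be a scaling function, and let x < 0. Then (a(θ)/θ) · log F_θ((θ/a(θ))x + β(α,θ)) → −∞ as θ → ∞ (with the convention log 0 = −∞ on the set where the argument of F_θ is nonpositive). -/

import Mathlib

open MeasureTheory Filter Set

/-- `c_α = α / Γ(1-α)`. -/
noncomputable def cAlpha (α : ℝ) : ℝ := α / Real.Gamma (1 - α)

/-- `β(α,θ) = log θ - (α+1) log log θ - log Γ(1-α)`. -/
noncomputable def betaShift (α θ : ℝ) : ℝ :=
  Real.log θ - (α + 1) * Real.log (Real.log θ) - Real.log (Real.Gamma (1 - α))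

/-- The distribution function of the largest jump `V₁(T)`:
`F_θ(s) = (1 + c_α s^{-α} ∫_1^∞ z^{-(1+α)} e^{-sz} dz)^{-θ/α}` for `s > 0`, and `0` for `s ≤ 0`. -/
noncomputable def Fdist (α θ s : ℝ) : ℝ :=
  if 0 < s then
    (1 + cAlpha α * s ^ (-α) *
        ∫ z in Set.Ioi (1:ℝ), z ^ (-(1 + α)) * Real.exp (-(s * z))) ^ (-(θ / α))
  else 0

/-- `log F_θ(s)` as an extended real, with the convention `log 0 = -∞` where `s ≤ 0`. -/
noncomputable def logFdist (α θ s : ℝ) : EReal :=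
  if 0 < s then ((Real.log (Fdist α θ s) : ℝ) : EReal) else ⊥

/-!
For `s > 0` one has `(a/θ) log F_θ(s) = -(a/α) log (1 + G(s))` with
`G(s) = c_α s^{-α} ∫_1^∞ z^{-(1+α)} e^{-sz} dz`. Restricting the integral to
`(1, 1 + 1/(1+s)]` gives `G(s) ≥ c_α e^{-(s+1)} / (8 L^{α+1})` whenever `0 < s ≤ L` and `1 ≤ L`.
At `s = t x + β(α,θ)` with `t = θ/a(θ)` and `L = log θ`, the shift `β` is exactly what turns this
into `G(s) ≥ α e^{|x| t - 1} / (8 θ)`. Since `a(θ) e^{|x| t}/θ = e^{|x| t}/t → ∞` and `a(θ) → ∞`,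
`a(θ) log (1 + G(s)) → ∞`; where `s ≤ 0` the expression is already `-∞`.
-/

lemma integrableOn_rpow_mul_exp_neg_mul {p s : ℝ} (hp : p ≤ 0) (hs : 0 < s) :
    IntegrableOn (fun z : ℝ => z ^ p * Real.exp (-(s * z))) (Ioi 1) := by
  refine Integrable.mono' (exp_neg_integrableOn_Ioi 1 hs) ?_ ?_
  · refine ContinuousOn.aestronglyMeasurable ?_ measurableSet_Ioi
    exact (continuousOn_id.rpow_const fun z hz => Or.inl (zero_lt_one.trans hz).ne').mul
      (by fun_prop)
  · filter_upwards [ae_restrict_mem measurableSet_Ioi] with z hz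
    have hz0 : 0 ≤ z ^ p := Real.rpow_nonneg (zero_le_one.trans hz.le) p
    rw [Real.norm_of_nonneg (mul_nonneg hz0 (Real.exp_pos _).le), neg_mul]
    exact mul_le_of_le_one_left (Real.exp_pos _).le (Real.rpow_le_one_of_one_le_of_nonpos hz.le hp)

/-- The integrand is at least `e^{-(s+1)}/4` on `(1, 1 + 1/(1+s)]`. -/
lemma exp_div_le_integral_rpow_mul_exp_neg_mul {p s : ℝ} (hp : -2 ≤ p) (hp0 : p ≤ 0)
    (hs : 0 < s) :
    Real.exp (-(s + 1)) / (4 * (1 + s)) ≤ ∫ z in Ioi (1:ℝ), z ^ p * Real.exp (-(s * z)) := by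
  set b : ℝ := 1 + 1 / (1 + s)
  have hb2 : b ≤ 2 := by
    have : 1 / (1 + s) ≤ 1 := by rw [div_le_one (by linarith)]; linarith
    linarith
  have hsb : s * b ≤ s + 1 := by
    have : s * (1 / (1 + s)) ≤ 1 := by rw [mul_one_div, div_le_one (by linarith)]; linarith
    simp only [b, mul_add, mul_one]; linarith
  calc Real.exp (-(s + 1)) / (4 * (1 + s)) = ∫ _ in Ioc (1:ℝ) b, Real.exp (-(s + 1)) / 4 := by
        have hlen : b - 1 = 1 / (1 + s) := add_sub_cancel_left 1 _
        rw [setIntegral_const, measureReal_def, Real.volume_Ioc, hlen,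
          ENNReal.toReal_ofReal (by positivity), smul_eq_mul]
        field_simp
    _ ≤ ∫ z in Ioc (1:ℝ) b, z ^ p * Real.exp (-(s * z)) := by
        refine setIntegral_mono_on (integrableOn_const measure_Ioc_lt_top.ne)
          ((integrableOn_rpow_mul_exp_neg_mul hp0 hs).mono_set Ioc_subset_Ioi_self)
          measurableSet_Ioc fun z ⟨hz1, hzb⟩ => ?_
        have hquarter : 1 / 4 ≤ z ^ p := calc
          (1:ℝ) / 4 = 2 ^ (-2:ℝ) := by norm_num
          _ ≤ z ^ (-2:ℝ) := Real.rpow_le_rpow_of_nonpos (by linarith) (hzb.trans hb2) (by norm_num)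
          _ ≤ z ^ p := Real.rpow_le_rpow_of_exponent_le hz1.le hp
        have hexp : Real.exp (-(s + 1)) ≤ Real.exp (-(s * z)) :=
          Real.exp_le_exp.2 (by nlinarith)
        calc Real.exp (-(s + 1)) / 4 = 1 / 4 * Real.exp (-(s + 1)) := by ring
          _ ≤ z ^ p * Real.exp (-(s * z)) := by gcongr
    _ ≤ ∫ z in Ioi (1:ℝ), z ^ p * Real.exp (-(s * z)) := by
        refine setIntegral_mono_set (integrableOn_rpow_mul_exp_neg_mul hp0 hs) ?_
          Ioc_subset_Ioi_self.eventuallyLE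
        filter_upwards [ae_restrict_mem measurableSet_Ioi] with z hz
        exact mul_nonneg (Real.rpow_nonneg (zero_le_one.trans hz.le) p) (Real.exp_pos _).le

lemma min_one_div_two_le_log_one_add {y : ℝ} (hy : 0 ≤ y) : min 1 y / 2 ≤ Real.log (1 + y) := by
  have hlog := Real.one_sub_inv_le_log_of_pos (show 0 < 1 + y by linarith)
  refine le_trans ?_ hlog
  rw [show 1 - (1 + y)⁻¹ = y / (1 + y) by field_simp; ring, le_div_iff₀ (by linarith)]
  rcases le_total y 1 with h | h
  · rw [min_eq_right h]; nlinarith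
  · rw [min_eq_left h]; linarith

lemma tendsto_mul_log_one_add_atTop {ι : Type*} {l : Filter ι} {f g : ι → ℝ}
    (hf : Tendsto f l atTop) (hfg : Tendsto (fun i => f i * g i) l atTop)
    (hg : ∀ᶠ i in l, 0 ≤ g i) : Tendsto (fun i => f i * Real.log (1 + g i)) l atTop := by
  refine tendsto_atTop_mono' l ?_ ((tendsto_inf_atTop l hf hfg).atTop_div_const two_pos)
  filter_upwards [hf.eventually_ge_atTop 0, hg] with i hfi hgi
  calc min (f i) (f i * g i) / 2 = f i * (min 1 (g i) / 2) := by
        rw [← mul_div_assoc, mul_min_of_nonneg _ _ hfi, mul_one]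
    _ ≤ f i * Real.log (1 + g i) := by gcongr; exact min_one_div_two_le_log_one_add hgi

lemma tendsto_exp_mul_div_atTop {b : ℝ} (hb : 0 < b) :
    Tendsto (fun u => Real.exp (b * u) / u) atTop atTop := by
  simpa only [Real.rpow_one] using tendsto_exp_mul_div_rpow_atTop 1 b hb

/-- The quantity `G` with `F_θ(s) = (1 + G(s))^{-θ/α}` for `s > 0`. -/
noncomputable def tailTerm (α s : ℝ) : ℝ :=
  cAlpha α * s ^ (-α) * ∫ z in Ioi (1:ℝ), z ^ (-(1 + α)) * Real.exp (-(s * z))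

section TailTerm

variable {α : ℝ}

lemma Gamma_one_sub_pos (hα : α < 1) : 0 < Real.Gamma (1 - α) :=
  Real.Gamma_pos_of_pos (by linarith)

lemma cAlpha_nonneg (hα0 : 0 ≤ α) (hα1 : α < 1) : 0 ≤ cAlpha α :=
  div_nonneg hα0 (Gamma_one_sub_pos hα1).le

lemma cAlpha_mul_Gamma (hα : α < 1) : cAlpha α * Real.Gamma (1 - α) = α :=
  div_mul_cancel₀ α (Gamma_one_sub_pos hα).ne'

lemma tailTerm_nonneg (hα0 : 0 ≤ α) (hα1 : α < 1) {s : ℝ} (hs : 0 ≤ s) : 0 ≤ tailTerm α s := by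
  refine mul_nonneg (mul_nonneg (cAlpha_nonneg hα0 hα1) (Real.rpow_nonneg hs _)) ?_
  refine setIntegral_nonneg measurableSet_Ioi fun z hz => ?_
  exact mul_nonneg (Real.rpow_nonneg (zero_le_one.trans (le_of_lt hz)) _) (Real.exp_pos _).le

lemma logFdist_of_pos (hα0 : 0 ≤ α) (hα1 : α < 1) (θ : ℝ) {s : ℝ} (hs : 0 < s) :
    logFdist α θ s = ((-(θ / α) * Real.log (1 + tailTerm α s) : ℝ) : EReal) := by
  have hG := tailTerm_nonneg hα0 hα1 hs.le
  rw [logFdist, if_pos hs, Fdist, if_pos hs, ← tailTerm, Real.log_rpow (by linarith)]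

lemma exp_div_le_tailTerm (hα0 : 0 ≤ α) (hα1 : α < 1) {s L : ℝ} (hs : 0 < s) (hsL : s ≤ L)
    (hL : 1 ≤ L) :
    cAlpha α * Real.exp (-(s + 1)) / (8 * L ^ (α + 1)) ≤ tailTerm α s := by
  have hL0 : 0 < L := zero_lt_one.trans_le hL
  have hc := cAlpha_nonneg hα0 hα1
  have hI := exp_div_le_integral_rpow_mul_exp_neg_mul (p := -(1 + α)) (by linarith)
    (by linarith) hs
  have hpow : L ^ (-α) ≤ s ^ (-α) := Real.rpow_le_rpow_of_nonpos hs hsL (by linarith)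
  have hden : 4 * (1 + s) ≤ 8 * L := by linarith
  calc cAlpha α * Real.exp (-(s + 1)) / (8 * L ^ (α + 1))
      = cAlpha α * L ^ (-α) * (Real.exp (-(s + 1)) / (8 * L)) := by
        rw [Real.rpow_add_one hL0.ne', Real.rpow_neg hL0.le]
        field_simp
    _ ≤ cAlpha α * s ^ (-α) * (Real.exp (-(s + 1)) / (4 * (1 + s))) := by gcongr
    _ ≤ tailTerm α s := by
        unfold tailTerm
        gcongr

lemma exp_neg_betaShift (hα : α < 1) {θ : ℝ} (hθ : 1 < θ) :
    Real.exp (-betaShift α θ) = Real.log θ ^ (α + 1) * Real.Gamma (1 - α) / θ := by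
  have hL : 0 < Real.log θ := Real.log_pos hθ
  rw [betaShift, Real.rpow_def_of_pos hL, show -(Real.log θ - (α + 1) * Real.log (Real.log θ)
      - Real.log (Real.Gamma (1 - α))) = Real.log (Real.log θ) * (α + 1)
      + Real.log (Real.Gamma (1 - α)) - Real.log θ by ring, Real.exp_sub, Real.exp_add,
    Real.exp_log (Gamma_one_sub_pos hα), Real.exp_log (zero_lt_one.trans hθ)]

lemma exp_div_le_tailTerm_add_betaShift (hα0 : 0 ≤ α) (hα1 : α < 1) {θ y : ℝ}
    (hθ : Real.exp 1 ≤ θ) (hβ : betaShift α θ ≤ Real.log θ) (hy : y ≤ 0)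
    (hs : 0 < y + betaShift α θ) :
    α * Real.exp (-(y + 1)) / (8 * θ) ≤ tailTerm α (y + betaShift α θ) := by
  have hθ1 : 1 < θ := (Real.one_lt_exp_iff.2 one_pos).trans_le hθ
  have hL : 1 ≤ Real.log θ := (Real.le_log_iff_exp_le (by linarith)).2 hθ
  refine le_trans (le_of_eq ?_) (exp_div_le_tailTerm hα0 hα1 hs (by linarith) hL)
  rw [show -(y + betaShift α θ + 1) = -(y + 1) + -betaShift α θ by ring, Real.exp_add,
    exp_neg_betaShift hα1 hθ1]
  nth_rewrite 1 [← cAlpha_mul_Gamma hα1]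
  have : 0 < Real.log θ ^ (α + 1) := Real.rpow_pos_of_pos (by linarith) _
  field_simp

lemma eventually_betaShift_le_log (hα : -1 < α) :
    ∀ᶠ θ in atTop, betaShift α θ ≤ Real.log θ := by
  have hloglog := (Real.tendsto_log_atTop.comp Real.tendsto_log_atTop).const_mul_atTop
    (show 0 < α + 1 by linarith)
  filter_upwards [hloglog.eventually_ge_atTop (-Real.log (Real.Gamma (1 - α)))] with θ h
  simp only [Function.comp_apply] at h
  rw [betaShift]
  linarith

end TailTerm

lemma mul_logFdist_le {α θ a y : ℝ} (hα0 : 0 < α) (hα1 : α < 1) (ha : 0 < a)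
    (hθ : Real.exp 1 ≤ θ) (hβ : betaShift α θ ≤ Real.log θ) (hy : y ≤ 0) :
    ((a / θ : ℝ) : EReal) * logFdist α θ (y + betaShift α θ)
      ≤ ((-(a / α * Real.log (1 + α * Real.exp (-(y + 1)) / (8 * θ))) : ℝ) : EReal) := by
  have hθ0 : 0 < θ := (Real.exp_pos 1).trans_le hθ
  by_cases hs : 0 < y + betaShift α θ
  · rw [logFdist_of_pos hα0.le hα1 θ hs, ← EReal.coe_mul, EReal.coe_le_coe_iff,
      show a / θ * (-(θ / α) * Real.log (1 + tailTerm α (y + betaShift α θ)))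
        = -(a / α * Real.log (1 + tailTerm α (y + betaShift α θ))) by field_simp,
      neg_le_neg_iff]
    have hlow := exp_div_le_tailTerm_add_betaShift hα0.le hα1 hθ hβ hy hs
    gcongr
  · rw [logFdist, if_neg hs, EReal.coe_mul_bot_of_pos (div_pos ha hθ0)]
    exact bot_le

theorem mdp_lower_neg_general (α : ℝ) (hα : α ∈ Set.Ioo (0:ℝ) 1)
    (a : ℝ → ℝ)
    (ha : Filter.Tendsto a Filter.atTop Filter.atTop)
    (ha' : Filter.Tendsto (fun θ => a θ / θ) Filter.atTop (nhds 0))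
    (x : ℝ) (hx : x < 0) :
    Filter.Tendsto
      (fun θ : ℝ => ((a θ / θ : ℝ) : EReal) * logFdist α θ (θ / a θ * x + betaShift α θ))
      Filter.atTop (nhds ⊥) := by
  obtain ⟨hα0, hα1⟩ := hα
  have hapos : ∀ᶠ θ in atTop, 0 < a θ := ha.eventually_gt_atTop 0
  have hpos : ∀ᶠ θ in atTop, a θ / θ ∈ Ioi 0 := by
    filter_upwards [hapos, eventually_gt_atTop 0] with θ haθ hθ using div_pos haθ hθ
  have ht : Tendsto (fun θ => θ / a θ) atTop atTop := by
    convert (tendsto_nhdsWithin_iff.2 ⟨ha', hpos⟩).inv_tendsto_nhdsGT_zero using 1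
    ext θ
    exact (inv_div _ _).symm
  set g : ℝ → ℝ := fun θ => α * Real.exp (-(θ / a θ * x + 1)) / (8 * θ)
  have hag : Tendsto (fun θ => a θ / α * g θ) atTop atTop := by
    refine (((tendsto_exp_mul_div_atTop (neg_pos.2 hx)).comp ht).const_mul_atTop
      (show 0 < Real.exp (-1) / 8 by positivity)).congr' ?_
    filter_upwards [hapos, eventually_gt_atTop 0] with θ haθ hθ
    simp only [g, Function.comp_apply, neg_add, Real.exp_add]
    field_simp
  have hgrowth : Tendsto (fun θ => a θ / α * Real.log (1 + g θ)) atTop atTop :=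
    tendsto_mul_log_one_add_atTop (ha.atTop_div_const hα0) hag
      (by filter_upwards [eventually_gt_atTop 0] with θ hθ using by positivity)
  refine tendsto_nhds_bot_mono
    (EReal.tendsto_coe_nhds_bot_iff.2 (tendsto_neg_atTop_atBot.comp hgrowth)) ?_
  filter_upwards [hapos, eventually_gt_atTop 0, eventually_ge_atTop (Real.exp 1),
    eventually_betaShift_le_log (show -1 < α by linarith)] with θ haθ hθ hθe hβ
  exact mul_logFdist_le hα0 hα1 haθ hθe hβ
    (mul_nonpos_of_nonneg_of_nonpos (div_pos hθ haθ).le hx.le)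

/-- For `α ∈ (0,1)`, a scaling function `a` (`a(θ) → ∞`, `a(θ)/θ → 0`) and `x < 0`,
`(a(θ)/θ) log F_θ((θ/a(θ)) x + β(α,θ)) → -∞` as `θ → ∞`, with the convention `log 0 = -∞`
where the argument of `F_θ` is nonpositive. -/
theorem mdp_lower_neg (α : ℝ) (hα : α ∈ Set.Ioo (0:ℝ) 1)
    (a : ℝ → ℝ) (hapos : ∀ θ > (0:ℝ), 0 < a θ)
    (ha : Filter.Tendsto a Filter.atTop Filter.atTop)
    (ha' : Filter.Tendsto (fun θ => a θ / θ) Filter.atTop (nhds 0))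
    (x : ℝ) (hx : x < 0) :
    Filter.Tendsto
      (fun θ : ℝ => ((a θ / θ : ℝ) : EReal) * logFdist α θ (θ / a θ * x + betaShift α θ))
      Filter.atTop (nhds ⊥) :=
  mdp_lower_neg_general α hα a ha ha' x hx
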